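/- arXiv:1609.06615 — 7 statements merged into one kernel-verified Lean document; each statement's English description precedes it below -/
import Mathlib

section
/- Let A, B be positive semidefinite n×n complex matrices. Then A is isosceles orthogonal to B with respect to the trace norm, i.e. ‖A + B‖₁ = ‖A − B‖₁, if and only if A·B = 0 and B·A = 0. -/
/-!
For positive `A`, `B` we have `‖A + B‖₁ = tr A + tr B`. Let `P` be the spectral projection of
`A - B` onto its positive eigenspaces, so that
`‖A - B‖₁ = tr (P (A - B)) - tr ((1 - P) (A - B))`.
Then `tr A + tr B - ‖A - B‖₁ = 2 tr ((1 - P) A) + 2 tr (P B)`. The trace of a product of two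
positive matrices is nonnegative, and vanishes only when the product does; so equality forces
`(1 - P) A = 0 = P B`, whence `B A = B P A = 0`. Conversely, if `A B = B A = 0` then
`(A + B)² = (A - B)²`, so `|A + B| = |A - B|`.
-/

open Matrix ComplexOrder

namespace Matrix.PosSemidef

/-- The positive semidefinite square root of a positive semidefinite matrix
(the definition of Mathlib of December 2024, since removed). -/
noncomputable def sqrt {n : Type*} [Fintype n] [DecidableEq n] {𝕜 : Type*} [RCLike 𝕜]
    {A : Matrix n n 𝕜} (hA : PosSemidef A) : Matrix n n 𝕜 :=
  hA.1.eigenvectorUnitary.1 * diagonal ((↑) ∘ (√·) ∘ hA.1.eigenvalues) *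
  (star hA.1.eigenvectorUnitary : Matrix n n 𝕜)

lemma posSemidef_sqrt {n : Type*} [Fintype n] [DecidableEq n] {𝕜 : Type*} [RCLike 𝕜]
    {A : Matrix n n 𝕜} (hA : PosSemidef A) : PosSemidef hA.sqrt := by
  have h := (PosSemidef.diagonal (R := 𝕜) (d := ((↑) ∘ (√·) ∘ hA.1.eigenvalues))
    (fun i => by simp [Real.sqrt_nonneg])).mul_mul_conjTranspose_same
    (hA.1.eigenvectorUnitary : Matrix n n 𝕜)
  simpa [sqrt, Matrix.star_eq_conjTranspose] using h

end Matrix.PosSemidef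

/-- The absolute value `|A| = (AᴴA)^(1/2)` of a complex matrix `A`. -/
noncomputable def matAbs {n : ℕ} (A : Matrix (Fin n) (Fin n) ℂ) : Matrix (Fin n) (Fin n) ℂ :=
  (Matrix.posSemidef_conjTranspose_mul_self A).sqrt

/-- The Schatten `p`-norm `‖A‖ₚ = (tr |A|^p)^(1/p)`, computed via the eigenvalues of `|A|`. -/
noncomputable def schattenNorm {n : ℕ} (p : ℝ) (A : Matrix (Fin n) (Fin n) ℂ) : ℝ :=
  (∑ i, ((Matrix.posSemidef_conjTranspose_mul_self A).posSemidef_sqrt.1.eigenvalues i) ^ p) ^ (1 / p)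

open scoped MatrixOrder

lemma IsSelfAdjoint.mul_eq_zero_symm {R : Type*} [NonUnitalNonAssocRing R] [StarRing R] {a b : R}
    (ha : IsSelfAdjoint a) (hb : IsSelfAdjoint b) (hab : a * b = 0) : b * a = 0 :=
  (ha.commute_of_mul_eq_zero hb hab).eq ▸ hab

namespace CFC

variable {R : Type*} [NonUnitalRing R] [StarRing R] [TopologicalSpace R]
  [Module ℝ R] [SMulCommClass ℝ R R] [IsScalarTower ℝ R R]
  [NonUnitalContinuousFunctionalCalculus ℝ R IsSelfAdjoint]
  [PartialOrder R] [StarOrderedRing R] [NonnegSpectrumClass ℝ R]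

lemma abs_add_eq_abs_sub_of_mul_eq_zero {a b : R} (ha : IsSelfAdjoint a) (hb : IsSelfAdjoint b)
    (hab : a * b = 0) : abs (a + b) = abs (a - b) := by
  have hba : b * a = 0 := ha.mul_eq_zero_symm hb hab
  have hsq : star (a + b) * (a + b) = star (a - b) * (a - b) := by
    simp only [star_add, star_sub, ha.star_eq, hb.star_eq, add_mul, mul_add, sub_mul, mul_sub,
      hab, hba]
    abel
  rw [abs, abs, hsq]

end CFC

namespace Matrix

variable {n 𝕜 : Type*} [Fintype n] [RCLike 𝕜]

lemma trace_star_mul_self_mul_star_mul_self (U V : Matrix n n 𝕜) :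
    (star U * U * (star V * V)).trace = (star (V * star U) * (V * star U)).trace := by
  rw [Matrix.mul_assoc, trace_mul_comm, star_mul, star_star]
  simp only [Matrix.mul_assoc]

lemma PosSemidef.trace_mul_nonneg {X Y : Matrix n n 𝕜} (hX : X.PosSemidef)
    (hY : Y.PosSemidef) : 0 ≤ (X * Y).trace := by
  classical
  obtain ⟨U, rfl⟩ := CStarAlgebra.nonneg_iff_eq_star_mul_self.mp hX.nonneg
  obtain ⟨V, rfl⟩ := CStarAlgebra.nonneg_iff_eq_star_mul_self.mp hY.nonneg
  rw [trace_star_mul_self_mul_star_mul_self]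
  exact (posSemidef_conjTranspose_mul_self _).trace_nonneg

lemma PosSemidef.trace_mul_eq_zero_iff {X Y : Matrix n n 𝕜} (hX : X.PosSemidef)
    (hY : Y.PosSemidef) : (X * Y).trace = 0 ↔ X * Y = 0 := by
  refine ⟨fun h => ?_, fun h => by rw [h, trace_zero]⟩
  classical
  obtain ⟨U, rfl⟩ := CStarAlgebra.nonneg_iff_eq_star_mul_self.mp hX.nonneg
  obtain ⟨V, rfl⟩ := CStarAlgebra.nonneg_iff_eq_star_mul_self.mp hY.nonneg
  rw [trace_star_mul_self_mul_star_mul_self] at h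
  have hVU : V * star U = 0 := trace_conjTranspose_mul_self_eq_zero_iff.mp h
  calc star U * U * (star V * V) = star U * star (V * star U) * V := by
        simp only [star_mul, star_star, Matrix.mul_assoc]
    _ = 0 := by rw [hVU, star_zero, Matrix.mul_zero, Matrix.zero_mul]

variable [DecidableEq n]

lemma PosSemidef.sqrt_eq_cfcSqrt {A : Matrix n n 𝕜} (hA : PosSemidef A) :
    hA.sqrt = CFC.sqrt A := by
  rw [CFC.sqrt_eq_cfc, cfc_nnreal_eq_real _ A hA.nonneg, hA.1.cfc_eq]
  simp only [sqrt, IsHermitian.cfc, Unitary.conjStarAlgAut_apply]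
  congr 3
  funext i
  simp [Real.coe_sqrt, Real.coe_toNNReal', max_eq_left (hA.eigenvalues_nonneg i)]

lemma IsHermitian.exists_cfcAbs_eq {C : Matrix n n 𝕜} (hC : C.IsHermitian) :
    ∃ P : Matrix n n 𝕜, P.PosSemidef ∧ (1 - P).PosSemidef ∧
      CFC.abs C = P * C - (1 - P) * C := by
  -- the spectrum is finite, so the step function `s` below is admissible in `cfc`
  have hcont (f : ℝ → ℝ) : ContinuousOn f (spectrum ℝ C) :=
    C.finite_real_spectrum.continuousOn f
  set s : ℝ → ℝ := fun x => if 0 < x then 1 else 0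
  have hs (x : ℝ) : 0 ≤ s x ∧ s x ≤ 1 := by simp only [s]; split_ifs <;> norm_num
  have hsub : cfc (fun x => 1 - s x) C = 1 - cfc s C := by
    rw [cfc_sub _ _ C (hcont _) (hcont _), cfc_const_one ℝ C]
  have habs (x : ℝ) : ‖x‖ = s x * x - (1 - s x) * x := by
    simp only [s, Real.norm_eq_abs]
    split_ifs with hx
    · rw [abs_of_pos hx]; ring
    · rw [abs_of_nonpos (not_lt.1 hx)]; ring
  refine ⟨cfc s C, (cfc_nonneg fun x _ => (hs x).1).posSemidef, ?_, ?_⟩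
  · rw [← hsub]
    exact (cfc_nonneg fun x _ => sub_nonneg.2 (hs x).2).posSemidef
  · rw [CFC.abs_eq_cfc_norm C hC.isSelfAdjoint, cfc_congr fun x _ => habs x,
      cfc_sub _ _ C (hcont _) (hcont _), cfc_mul _ _ C (hcont _) (hcont _),
      cfc_mul _ _ C (hcont _) (hcont _), cfc_id' ℝ C, hsub]

lemma PosSemidef.mul_eq_zero_of_trace_cfcAbs_sub {A B : Matrix n n 𝕜} (hA : A.PosSemidef)
    (hB : B.PosSemidef) (h : (CFC.abs (A - B)).trace = (A + B).trace) :
    A * B = 0 ∧ B * A = 0 := by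
  obtain ⟨P, hP, hQ, habs⟩ := (hA.1.sub hB.1).exists_cfcAbs_eq
  have hsum : ((1 - P) * A).trace + (P * B).trace = 0 := by
    have key : (A + B).trace - (CFC.abs (A - B)).trace =
        2 * (((1 - P) * A).trace + (P * B).trace) := by
      simp only [habs, trace_add, trace_sub, Matrix.sub_mul, Matrix.mul_sub, Matrix.one_mul]
      ring
    rw [h, sub_self, eq_comm] at key
    exact (mul_eq_zero.mp key).resolve_left two_ne_zero
  obtain ⟨hQA, hPB⟩ := (add_eq_zero_iff_of_nonneg (hQ.trace_mul_nonneg hA)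
    (hP.trace_mul_nonneg hB)).mp hsum
  have hA_eq : A = P * A := by
    rw [hQ.trace_mul_eq_zero_iff hA, Matrix.sub_mul, Matrix.one_mul, sub_eq_zero] at hQA
    exact hQA
  have hBP : B * P = 0 :=
    hP.1.isSelfAdjoint.mul_eq_zero_symm hB.1 ((hP.trace_mul_eq_zero_iff hB).mp hPB)
  have hBA : B * A = 0 := by rw [hA_eq, ← Matrix.mul_assoc, hBP, Matrix.zero_mul]
  exact ⟨hB.1.isSelfAdjoint.mul_eq_zero_symm hA.1 hBA, hBA⟩

end Matrix

lemma matAbs_eq_cfcAbs {n : ℕ} (M : Matrix (Fin n) (Fin n) ℂ) : matAbs M = CFC.abs M :=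
  PosSemidef.sqrt_eq_cfcSqrt _

lemma ofReal_schattenNorm_one {n : ℕ} (M : Matrix (Fin n) (Fin n) ℂ) :
    (schattenNorm 1 M : ℂ) = (CFC.abs M).trace := by
  rw [← matAbs_eq_cfcAbs, matAbs,
    (posSemidef_conjTranspose_mul_self M).posSemidef_sqrt.1.trace_eq_sum_eigenvalues]
  simp [schattenNorm]

theorem isosceles_traceNorm_iff_mul_eq_zero {n : ℕ}
    (A B : Matrix (Fin n) (Fin n) ℂ) (hA : A.PosSemidef) (hB : B.PosSemidef) :
    schattenNorm 1 (A + B) = schattenNorm 1 (A - B) ↔ (A * B = 0 ∧ B * A = 0) := by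
  have habs_add : CFC.abs (A + B) = A + B := CFC.abs_of_nonneg _ (hA.add hB).nonneg
  rw [← Complex.ofReal_inj, ofReal_schattenNorm_one, ofReal_schattenNorm_one]
  refine ⟨fun h => hA.mul_eq_zero_of_trace_cfcAbs_sub hB (by rw [← h, habs_add]),
    fun ⟨hAB, _⟩ => by rw [CFC.abs_add_eq_abs_sub_of_mul_eq_zero hA.1 hB.1 hAB]⟩
end

section
/- Let X be a uniformly convex Banach space over 𝕂 ∈ {ℝ, ℂ} and let x, y ∈ X. Then x is norm-parallel to y if and only if x and y are linearly dependent. -/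
/-!
A scalar multiple `x = c • y` is norm-parallel to `y` via the unimodular scalar `c / ‖c‖`.
Conversely, `‖x + λ • y‖ = ‖x‖ + ‖λ • y‖` says that `x` and `λ • y` lie on a common ray, because a
uniformly convex space is strictly convex over `ℝ`; hence `x` is a multiple of `y` or `y = 0`.
-/

section NormParallel

variable {𝕜 X : Type*} [RCLike 𝕜] [NormedAddCommGroup X] [NormedSpace 𝕜 X]

variable (𝕜) in
def NormParallel (x y : X) : Prop :=
  ∃ lam : 𝕜, ‖lam‖ = 1 ∧ ‖x + lam • y‖ = ‖x‖ + ‖y‖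

theorem normParallel_zero_right (x : X) : NormParallel 𝕜 x 0 :=
  ⟨1, norm_one, by simp⟩

theorem normParallel_smul_left (c : 𝕜) (y : X) : NormParallel 𝕜 (c • y) y := by
  rcases eq_or_ne c 0 with rfl | hc
  · exact ⟨1, norm_one, by simp⟩
  have hc' : ‖c‖ ≠ 0 := norm_ne_zero_iff.2 hc
  refine ⟨c / ‖c‖, by simp [norm_div, hc'], ?_⟩
  have hsum : c + c / ‖c‖ = ((1 + ‖c‖⁻¹ : ℝ) : 𝕜) * c := by push_cast; ring
  rw [← add_smul, norm_smul, norm_smul, hsum, norm_mul, RCLike.norm_ofReal,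
    abs_of_pos (by positivity), add_mul, inv_mul_cancel₀ hc']
  ring

theorem NormParallel.eq_zero_or_exists_eq_smul [NormedSpace ℝ X] [IsScalarTower ℝ 𝕜 X]
    [StrictConvexSpace ℝ X] {x y : X} (h : NormParallel 𝕜 x y) :
    y = 0 ∨ ∃ c : 𝕜, x = c • y := by
  obtain ⟨lam, hlam, hnorm⟩ := h
  have hray : SameRay ℝ x (lam • y) := by
    rwa [sameRay_iff_norm_add, norm_smul, hlam, one_mul]
  rcases eq_or_ne (lam • y) 0 with hy | hy
  · exact .inl ((smul_eq_zero_iff_right (norm_ne_zero_iff.1 (hlam.trans_ne one_ne_zero))).1 hy)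
  obtain ⟨r, -, rfl⟩ := hray.exists_nonneg_right hy
  exact .inr ⟨(r : 𝕜) * lam, by rw [mul_smul, algebraMap_smul]⟩

end NormParallel

theorem exists_nontrivial_smul_add_smul_eq_zero_iff {K M : Type*} [DivisionRing K]
    [AddCommGroup M] [Module K M] {x y : M} :
    (∃ a b : K, (a ≠ 0 ∨ b ≠ 0) ∧ a • x + b • y = 0) ↔ y = 0 ∨ ∃ c : K, x = c • y := by
  constructor
  · rintro ⟨a, b, hab, h⟩
    rcases eq_or_ne a 0 with rfl | ha
    · rw [zero_smul, zero_add, smul_eq_zero] at h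
      exact .inl (h.resolve_left (hab.resolve_left (not_not.2 rfl)))
    · refine .inr ⟨-(a⁻¹ * b), ?_⟩
      rw [neg_smul, mul_smul, ← smul_neg, eq_inv_smul_iff₀ ha, eq_neg_of_add_eq_zero_left h]
  · rintro (rfl | ⟨c, rfl⟩)
    · exact ⟨0, 1, .inr one_ne_zero, by simp⟩
    · exact ⟨1, -c, .inl one_ne_zero, by simp⟩

theorem parallel_iff_linearly_dependent_of_uniformConvex_general
    {𝕜 X : Type*} [RCLike 𝕜] [NormedAddCommGroup X] [NormedSpace 𝕜 X]
    [UniformConvexSpace X] (x y : X) :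
    (∃ lam : 𝕜, ‖lam‖ = 1 ∧ ‖x + lam • y‖ = ‖x‖ + ‖y‖) ↔
      ∃ a b : 𝕜, (a ≠ 0 ∨ b ≠ 0) ∧ a • x + b • y = 0 := by
  let _ : NormedSpace ℝ X := NormedSpace.restrictScalars ℝ 𝕜 X
  rw [exists_nontrivial_smul_add_smul_eq_zero_iff]
  refine ⟨NormParallel.eq_zero_or_exists_eq_smul, ?_⟩
  rintro (rfl | ⟨c, rfl⟩)
  exacts [normParallel_zero_right x, normParallel_smul_left c y]

theorem parallel_iff_linearly_dependent_of_uniformConvex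
    {𝕜 X : Type*} [RCLike 𝕜] [NormedAddCommGroup X] [NormedSpace 𝕜 X]
    [CompleteSpace X] [UniformConvexSpace X] (x y : X) :
    (∃ lam : 𝕜, ‖lam‖ = 1 ∧ ‖x + lam • y‖ = ‖x‖ + ‖y‖) ↔
      ∃ a b : 𝕜, (a ≠ 0 ∨ b ≠ 0) ∧ a • x + b • y = 0 :=
  parallel_iff_linearly_dependent_of_uniformConvex_general x y
end

section
/- Let X be a nonzero Banach space over 𝕂 ∈ {ℝ, ℂ} and let A be a bounded linear operator on X. Then A is norm-parallel to the identity operator I, i.e. there exists λ with |λ| = 1 such that ‖A + λ·I‖ = ‖A‖ + 1, if and only if ‖A‖ = v(A), where v(A) = sup{ |x*(Ax)| : x ∈ X, x* ∈ X*, ‖x‖ = 1, ‖x*‖ = 1, x*(x) = 1 } is the numerical radius of A. -/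
/-- The numerical radius of a bounded linear operator on a Banach space. -/
noncomputable def numRadius {𝕜 X : Type*} [RCLike 𝕜] [NormedAddCommGroup X] [NormedSpace 𝕜 X]
    (A : X →L[𝕜] X) : ℝ :=
  sSup {r : ℝ | ∃ (x : X) (f : X →L[𝕜] 𝕜), ‖x‖ = 1 ∧ ‖f‖ = 1 ∧ f x = 1 ∧ r = ‖f (A x)‖}

/-!
If `‖A + λ‖ = ‖A‖ + 1` with `|λ| = 1`, a unit functional norming `A + λ` at a unit vector `x`
must almost norm both `A x` and `λ x`; rotated by `λ` it gives an approximate state `(x, g)`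
with `re (g x) ≈ 1` and `‖g (A x)‖ ≈ ‖A‖`. The Bishop–Phelps–Bollobás theorem, obtained from
Ekeland's variational principle and the Hahn–Banach theorem, moves it to an exact state `(y, h)`
nearby, whence `v(A) ≥ ‖A‖`. Conversely, for every state `(x, f)` there is a unimodular `μ`
pointing in the direction of `f (A x)`, so `‖A + μ‖ ≥ ‖f (A x)‖ + 1`; a maximiser `λ` of
`μ ↦ ‖A + μ‖` on the unit circle therefore satisfies `‖A + λ‖ ≥ v(A) + 1 = ‖A‖ + 1`.
-/

open Set Filter Topology Metric RCLike

section Ekeland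

variable {Y : Type*} [MetricSpace Y] {F : Y → ℝ} {α : ℝ}

def ekelandSet (F : Y → ℝ) (α : ℝ) (w : Y) : Set Y := {z | F z + α * dist z w ≤ F w}

lemma self_mem_ekelandSet (w : Y) : w ∈ ekelandSet F α w := by
  simp [ekelandSet]

lemma ekelandSet_subset_of_mem (hα : 0 ≤ α) {w w' : Y} (h : w' ∈ ekelandSet F α w) :
    ekelandSet F α w' ⊆ ekelandSet F α w := fun z hz => by
  simp only [ekelandSet, mem_ofPred_eq] at *
  nlinarith [dist_triangle z w' w]

lemma LowerSemicontinuous.isClosed_ekelandSet (hF : LowerSemicontinuous F) (w : Y) :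
    IsClosed (ekelandSet F α w) :=
  (hF.add (continuous_const.mul (continuous_id.dist continuous_const)).lowerSemicontinuous)
    |>.isClosed_preimage (F w)

lemma exists_mem_ekelandSet_subset_closedBall (hbdd : BddBelow (range F)) (hα : 0 < α) (w : Y)
    {r : ℝ} (hr : 0 < r) : ∃ w' ∈ ekelandSet F α w, ekelandSet F α w' ⊆ closedBall w' r := by
  have hne : (F '' ekelandSet F α w).Nonempty := ⟨F w, w, self_mem_ekelandSet w, rfl⟩
  obtain ⟨_, ⟨w', hw', rfl⟩, hlt⟩ :=
    exists_lt_of_csInf_lt hne (lt_add_of_pos_right _ (mul_pos hα hr))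
  refine ⟨w', hw', fun z hz => mem_closedBall.2 (le_of_mul_le_mul_left ?_ hα)⟩
  have hinf : sInf (F '' ekelandSet F α w) ≤ F z :=
    csInf_le (hbdd.mono (image_subset_range _ _)) ⟨z, ekelandSet_subset_of_mem hα.le hw' hz, rfl⟩
  simp only [ekelandSet, mem_ofPred_eq] at hz
  linarith

theorem ekeland_variational_principle [CompleteSpace Y] (hF : LowerSemicontinuous F)
    (hbdd : BddBelow (range F)) (hα : 0 < α) (x : Y) :
    ∃ y, F y + α * dist y x ≤ F x ∧ ∀ z, z ≠ y → F y < F z + α * dist z y := by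
  set S := ekelandSet F α
  -- Each step shrinks the Ekeland set into a ball of radius `1 / (n + 1)`, so the centres form a
  -- Cauchy sequence whose limit is the only point of `⋂ n, S (u n)`.
  choose next hnext_mem hnext_small using fun (n : ℕ) w =>
    exists_mem_ekelandSet_subset_closedBall hbdd hα w (Nat.one_div_pos_of_nat (n := n))
  let u : ℕ → Y := fun n => Nat.rec (next 0 x) (fun n w => next (n + 1) w) n
  have hanti : Antitone (fun n => S (u n)) := antitone_nat_of_succ_le fun n =>
    ekelandSet_subset_of_mem hα.le (hnext_mem (n + 1) (u n))
  have hsmall : ∀ n, S (u n) ⊆ closedBall (u n) (1 / ((n : ℝ) + 1)) := by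
    intro n; cases n <;> exact hnext_small _ _
  have hdist : ∀ n, ∀ z ∈ S (u n), dist (u n) z ≤ 1 / ((n : ℝ) + 1) := fun n z hz => by
    rw [dist_comm]; exact hsmall n hz
  have hcauchy : CauchySeq u := cauchySeq_of_le_tendsto_0' _
    (fun n m hnm => hdist n _ (hanti hnm (self_mem_ekelandSet _)))
    tendsto_one_div_add_atTop_nhds_zero_nat
  obtain ⟨y, hy⟩ := cauchySeq_tendsto_of_complete hcauchy
  have hyS : ∀ n, y ∈ S (u n) := fun n => (hF.isClosed_ekelandSet _).mem_of_tendsto hy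
    (eventually_atTop.2 ⟨n, fun m hm => hanti hm (self_mem_ekelandSet _)⟩)
  have hunique : ∀ z, (∀ n, z ∈ S (u n)) → z = y := fun z hz =>
    tendsto_nhds_unique (tendsto_iff_dist_tendsto_zero.2 <| squeeze_zero (fun _ => dist_nonneg)
      (fun n => hdist n z (hz n)) tendsto_one_div_add_atTop_nhds_zero_nat) hy
  refine ⟨y, ekelandSet_subset_of_mem hα.le (hnext_mem 0 x) (hyS 0), fun z hzy => ?_⟩
  by_contra! hz
  exact hzy (hunique z fun n => ekelandSet_subset_of_mem hα.le (hyS n) hz)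

end Ekeland

section InfConv

variable {E : Type*} [NormedAddCommGroup E] {q : E → ℝ}

noncomputable def normInfConv (q : E → ℝ) (w : E) : ℝ := ⨅ v, ‖w - v‖ + q v

lemma bddBelow_range_norm_sub_add (hq : ∀ v, -‖v‖ ≤ q v) (w : E) :
    BddBelow (range fun v => ‖w - v‖ + q v) :=
  ⟨-‖w‖, by
    rintro _ ⟨v, rfl⟩
    linarith [hq v, norm_sub_norm_le v w, norm_sub_rev v w]⟩

lemma normInfConv_le (hq : ∀ v, -‖v‖ ≤ q v) (w v : E) : normInfConv q w ≤ ‖w - v‖ + q v :=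
  ciInf_le (bddBelow_range_norm_sub_add hq w) v

lemma neg_norm_le_normInfConv (hq : ∀ v, -‖v‖ ≤ q v) (w : E) : -‖w‖ ≤ normInfConv q w :=
  le_ciInf fun v => by linarith [hq v, norm_sub_norm_le v w, norm_sub_rev v w]

lemma normInfConv_smul [NormedSpace ℝ E] (hq : ∀ c : ℝ, 0 < c → ∀ v, q (c • v) = c * q v)
    {c : ℝ} (hc : 0 < c) (w : E) : normInfConv q (c • w) = c * normInfConv q w := by
  simp_rw [normInfConv, Real.mul_iInf_of_nonneg hc.le, mul_add, ← hq c hc]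
  refine (Function.Surjective.iInf_congr (c • ·) (fun v => ⟨c⁻¹ • v, smul_inv_smul₀ hc.ne' v⟩)
    fun u => ?_).symm
  rw [← smul_sub, norm_smul, Real.norm_of_nonneg hc.le]

lemma normInfConv_add_le (hq : ∀ v, -‖v‖ ≤ q v) (hq_add : ∀ v v', q (v + v') ≤ q v + q v')
    (w w' : E) : normInfConv q (w + w') ≤ normInfConv q w + normInfConv q w' :=
  le_ciInf_add_ciInf fun v v' => (normInfConv_le hq _ (v + v')).trans <| by
    rw [add_sub_add_comm]
    linarith [hq_add v v', norm_add_le (w - v) (w' - v')]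

end InfConv

lemma LinearMap.abs_apply_le_of_forall_apply_le {E : Type*} [SeminormedAddCommGroup E]
    [Module ℝ E] (ψ : E →ₗ[ℝ] ℝ) {c : ℝ} (h : ∀ w, ψ w ≤ c * ‖w‖) (w : E) :
    |ψ w| ≤ c * ‖w‖ :=
  abs_le.2 ⟨by linarith [map_neg ψ w ▸ norm_neg w ▸ h (-w)], h w⟩

theorem exists_dual_eq_norm_of_forall_norm_le {E : Type*} [NormedAddCommGroup E]
    [NormedSpace ℝ E] {G : StrongDual ℝ E} (hG : ‖G‖ ≤ 1) {s : ℝ} (hs : 0 ≤ s) {y : E}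
    (hy : y ≠ 0) (h : ∀ v, ‖y‖ ≤ ‖y - v‖ + (G v + s * ‖v‖)) :
    ∃ φ : StrongDual ℝ E, ‖φ‖ ≤ 1 ∧ ‖φ - G‖ ≤ s ∧ φ y = ‖y‖ := by
  set q : E → ℝ := fun v => G v + s * ‖v‖
  have hq : ∀ v, -‖v‖ ≤ q v := fun v => by
    have hGv := neg_le_of_abs_le ((G.le_of_opNorm_le hG v).trans_eq (one_mul _))
    simp only [q]; linarith [mul_nonneg hs (norm_nonneg v)]
  have hq_smul : ∀ c : ℝ, 0 < c → ∀ v, q (c • v) = c * q v := fun c hc v => by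
    simp only [q, map_smul, smul_eq_mul, norm_smul, Real.norm_of_nonneg hc.le]; ring
  have hq_add : ∀ v v', q (v + v') ≤ q v + q v' := fun v v' => by
    simp only [q, map_add]; nlinarith [norm_add_le v v']
  have hdom : ∀ t : ℝ, t * ‖y‖ ≤ normInfConv q (t • y) := fun t => by
    rcases le_or_gt t 0 with ht | ht
    · have := neg_norm_le_normInfConv hq (t • y)
      rw [norm_smul, Real.norm_of_nonpos ht] at this
      linarith
    · rw [normInfConv_smul hq_smul ht]
      exact mul_le_mul_of_nonneg_left (le_ciInf h) ht.le
  -- `normInfConv q` lies below both `‖·‖` and `q`, so one Hahn–Banach extension dominated by it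
  -- controls `‖φ‖` and `‖φ - G‖` at once.
  obtain ⟨φ, hφy, hφN⟩ := exists_extension_of_le_sublinear (.mkSpanSingleton y ‖y‖ hy)
    (normInfConv q) (fun c hc => normInfConv_smul hq_smul hc) (normInfConv_add_le hq hq_add)
    fun ⟨z, hz⟩ => by
      obtain ⟨t, rfl⟩ := Submodule.mem_span_singleton.1 hz
      rw [LinearPMap.mkSpanSingleton'_apply, smul_eq_mul]
      exact hdom t
  have hφ_norm : ∀ w, φ w ≤ 1 * ‖w‖ := fun w => by
    simpa [q] using (hφN w).trans (normInfConv_le hq w 0)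
  have hφ_G : ∀ w, (φ - G.toLinearMap) w ≤ s * ‖w‖ := fun w => by
    have := (hφN w).trans (normInfConv_le hq w w)
    simp only [q, sub_self, norm_zero, zero_add] at this
    simp only [LinearMap.sub_apply, ContinuousLinearMap.coe_coe]; linarith
  let φc : StrongDual ℝ E := φ.mkContinuous 1 (φ.abs_apply_le_of_forall_apply_le hφ_norm)
  refine ⟨φc, φ.mkContinuous_norm_le zero_le_one _, ?_, ?_⟩
  · exact ContinuousLinearMap.opNorm_le_bound _ hs
      ((φ - G.toLinearMap).abs_apply_le_of_forall_apply_le hφ_G)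
  · exact (hφy _).trans (LinearPMap.mkSpanSingleton_apply ℝ ℝ hy _)

lemma norm_inv_norm_smul_sub_le {E : Type*} [NormedAddCommGroup E] [NormedSpace ℝ E] {x : E}
    (hx : ‖x‖ = 1) (y : E) : ‖‖y‖⁻¹ • y - x‖ ≤ 2 * ‖y - x‖ := by
  rcases eq_or_ne y 0 with rfl | hy
  · simp [hx]
  have hrescale : ‖‖y‖⁻¹ • y - y‖ ≤ ‖y - x‖ :=
    calc ‖‖y‖⁻¹ • y - y‖ = |(‖y‖⁻¹ - 1) * ‖y‖| := by
          rw [abs_mul, abs_norm, ← Real.norm_eq_abs, ← norm_smul, sub_smul, one_smul]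
      _ = |‖x‖ - ‖y‖| := by rw [sub_one_mul, inv_mul_cancel₀ (norm_ne_zero_iff.2 hy), hx]
      _ ≤ ‖y - x‖ := (abs_norm_sub_norm_le x y).trans_eq (norm_sub_rev x y)
  linarith [norm_sub_le_norm_sub_add_norm_sub (‖y‖⁻¹ • y) y x]

theorem bishop_phelps_bollobas {E : Type*} [NormedAddCommGroup E] [NormedSpace ℝ E]
    [CompleteSpace E] {G : StrongDual ℝ E} (hG : ‖G‖ ≤ 1) {x : E} (hx : ‖x‖ = 1) {ε : ℝ}
    (hε0 : 0 < ε) (hε1 : ε < 1) (hGx : 1 - ε ^ 2 ≤ G x) :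
    ∃ (y : E) (φ : StrongDual ℝ E),
      ‖y‖ = 1 ∧ ‖φ‖ = 1 ∧ φ y = 1 ∧ ‖φ - G‖ ≤ ε ∧ ‖y - x‖ ≤ 2 * ε := by
  have hGle : ∀ z, G z ≤ ‖z‖ := fun z =>
    (le_abs_self _).trans ((G.le_of_opNorm_le hG z).trans_eq (one_mul _))
  obtain ⟨y₀, hy₀x, hy₀min⟩ := ekeland_variational_principle (F := fun z => ‖z‖ - G z)
    (continuous_norm.sub G.continuous).lowerSemicontinuous
    ⟨0, by rintro _ ⟨z, rfl⟩; linarith [hGle z]⟩ hε0 x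
  have hdist : ‖y₀ - x‖ ≤ ε := by
    rw [← dist_eq_norm]
    refine le_of_mul_le_mul_left ?_ hε0
    nlinarith [hGle y₀]
  have hy₀ : y₀ ≠ 0 := by
    rintro rfl
    rw [zero_sub, norm_neg, hx] at hdist
    linarith
  have hnorm : ∀ v, ‖y₀‖ ≤ ‖y₀ - v‖ + (G v + ε * ‖v‖) := fun v => by
    rcases eq_or_ne v 0 with rfl | hv
    · simp
    have := hy₀min (y₀ - v) (sub_eq_self.not.2 hv)
    rw [dist_eq_norm, sub_sub_cancel_left, norm_neg, map_sub] at this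
    linarith
  obtain ⟨φ, hφ, hφG, hφy⟩ := exists_dual_eq_norm_of_forall_norm_le hG hε0.le hy₀ hnorm
  have hφy' : φ (‖y₀‖⁻¹ • y₀) = 1 := by
    rw [map_smul, hφy, smul_eq_mul, inv_mul_cancel₀ (norm_ne_zero_iff.2 hy₀)]
  have hy : ‖‖y₀‖⁻¹ • y₀‖ = 1 := norm_smul_inv_norm hy₀
  refine ⟨‖y₀‖⁻¹ • y₀, φ, hy, le_antisymm hφ ?_, hφy', hφG, ?_⟩
  · simpa [hφy', hy] using φ.le_opNorm (‖y₀‖⁻¹ • y₀)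
  · linarith [norm_inv_norm_smul_sub_le hx y₀]

theorem bishop_phelps_bollobas_rclike {𝕜 E : Type*} [RCLike 𝕜] [NormedAddCommGroup E]
    [NormedSpace 𝕜 E] [NormedSpace ℝ E] [IsScalarTower ℝ 𝕜 E] [CompleteSpace E]
    {g : StrongDual 𝕜 E} (hg : ‖g‖ ≤ 1) {x : E} (hx : ‖x‖ = 1) {ε : ℝ} (hε0 : 0 < ε)
    (hε1 : ε < 1) (hgx : 1 - ε ^ 2 ≤ re (g x)) :
    ∃ (y : E) (h : StrongDual 𝕜 E),
      ‖y‖ = 1 ∧ ‖h‖ = 1 ∧ h y = 1 ∧ ‖h - g‖ ≤ ε ∧ ‖y - x‖ ≤ 2 * ε := by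
  set e := StrongDual.extendRCLikeₗᵢ (𝕜 := 𝕜) (F := E)
  obtain ⟨y, φ, hy, hφ, hφy, hφG, hyx⟩ :=
    bishop_phelps_bollobas (G := e.symm g) (by rwa [e.symm.norm_map]) hx hε0 hε1 hgx
  have hre : re (e φ y) = 1 := by
    simpa [e, StrongDual.extendRCLikeₗᵢ_apply] using hφy
  have hle : ‖e φ y‖ ≤ 1 := ((e φ).le_opNorm y).trans (by rw [e.norm_map, hφ, hy, one_mul])
  refine ⟨y, e φ, hy, by rw [e.norm_map, hφ], ?_, ?_, hyx⟩
  · rw [← re_eq_self_of_le (hle.trans hre.ge), hre, ofReal_one]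
  · rwa [← e.apply_symm_apply g, ← map_sub, e.norm_map]

lemma ContinuousLinearMap.exists_norm_eq_one_lt_norm_apply {𝕜 E F : Type*} [RCLike 𝕜]
    [NormedAddCommGroup E] [NormedSpace 𝕜 E] [NormedAddCommGroup F] [NormedSpace 𝕜 F]
    (T : E →L[𝕜] F) {r : ℝ} (hr0 : 0 ≤ r) (hr : r < ‖T‖) : ∃ x, ‖x‖ = 1 ∧ r < ‖T x‖ := by
  obtain ⟨x, hx1, hrx⟩ := T.exists_lt_apply_of_lt_opNorm hr
  have hx : x ≠ 0 := by
    rintro rfl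
    rw [map_zero, norm_zero] at hrx
    linarith
  refine ⟨(‖x‖⁻¹ : 𝕜) • x, norm_smul_inv_norm hx, hrx.trans_le ?_⟩
  rw [map_smul, norm_smul, norm_inv, norm_ofReal, abs_norm]
  exact le_mul_of_one_le_left (norm_nonneg _) (one_le_inv₀ (norm_pos_iff.2 hx) |>.2 hx1.le)

lemma exists_norm_eq_one_norm_add_eq {E : Type*} [NormedAddCommGroup E] [NormedSpace ℝ E]
    [Nontrivial E] (z : E) : ∃ u : E, ‖u‖ = 1 ∧ ‖z + u‖ = ‖z‖ + 1 := by
  rcases eq_or_ne z 0 with rfl | hz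
  · obtain ⟨u, hu⟩ := exists_norm_eq E zero_le_one
    exact ⟨u, hu, by rw [zero_add, norm_zero, zero_add, hu]⟩
  · refine ⟨‖z‖⁻¹ • z, norm_smul_inv_norm hz, ?_⟩
    rw [(SameRay.sameRay_nonneg_smul_right z (inv_nonneg.2 (norm_nonneg z))).norm_add]
    exact congrArg _ (norm_smul_inv_norm hz)

section NumRadius

variable {𝕜 X : Type*} [RCLike 𝕜] [NormedAddCommGroup X] [NormedSpace 𝕜 X]

lemma norm_apply_apply_le_of_norm_le_one {f : X →L[𝕜] 𝕜} (hf : ‖f‖ ≤ 1) (A : X →L[𝕜] X)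
    (x : X) : ‖f (A x)‖ ≤ ‖A‖ * ‖x‖ :=
  (f.le_of_opNorm_le hf _).trans ((one_mul _).trans_le (A.le_opNorm x))

lemma le_numRadius (A : X →L[𝕜] X) {x : X} {f : X →L[𝕜] 𝕜} (hx : ‖x‖ = 1) (hf : ‖f‖ = 1)
    (hfx : f x = 1) : ‖f (A x)‖ ≤ numRadius A := by
  refine le_csSup ⟨‖A‖, ?_⟩ ⟨x, f, hx, hf, hfx, rfl⟩
  rintro _ ⟨x, f, hx, hf, -, rfl⟩
  simpa [hx] using norm_apply_apply_le_of_norm_le_one hf.le A x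

lemma numRadius_le [Nontrivial X] {A : X →L[𝕜] X} {c : ℝ}
    (h : ∀ (x : X) (f : X →L[𝕜] 𝕜), ‖x‖ = 1 → ‖f‖ = 1 → f x = 1 → ‖f (A x)‖ ≤ c) :
    numRadius A ≤ c := by
  obtain ⟨x, hx⟩ := exists_ne (0 : X)
  obtain ⟨f, hf, hfx⟩ := exists_dual_vector' 𝕜 ((‖x‖⁻¹ : 𝕜) • x)
  rw [norm_smul_inv_norm hx, ofReal_one] at hfx
  refine csSup_le ⟨_, _, f, norm_smul_inv_norm hx, hf, hfx, rfl⟩ ?_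
  rintro _ ⟨x, f, hx, hf, hfx, rfl⟩
  exact h x f hx hf hfx

lemma numRadius_le_norm [Nontrivial X] (A : X →L[𝕜] X) : numRadius A ≤ ‖A‖ :=
  numRadius_le fun x _ hx hf _ => by
    simpa [hx] using norm_apply_apply_le_of_norm_le_one hf.le A x

lemma exists_numRadius_add_one_le [Nontrivial X] (A : X →L[𝕜] X) :
    ∃ lam : 𝕜, ‖lam‖ = 1 ∧ numRadius A + 1 ≤ ‖A + lam • (1 : X →L[𝕜] X)‖ := by
  obtain ⟨lam, hlam, hmax⟩ := (isCompact_sphere (0 : 𝕜) 1).exists_isMaxOn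
    (NormedSpace.sphere_nonempty.2 zero_le_one)
    (by fun_prop : Continuous fun μ : 𝕜 => ‖A + μ • (1 : X →L[𝕜] X)‖).continuousOn
  refine ⟨lam, mem_sphere_zero_iff_norm.1 hlam, le_sub_iff_add_le.1 (numRadius_le ?_)⟩
  intro x f hx hf hfx
  obtain ⟨μ, hμ, hadd⟩ := exists_norm_eq_one_norm_add_eq (f (A x))
  have hfμ : f ((A + μ • (1 : X →L[𝕜] X)) x) = f (A x) + μ := by simp [hfx]
  calc ‖f (A x)‖ = ‖f ((A + μ • (1 : X →L[𝕜] X)) x)‖ - 1 := by rw [hfμ, hadd]; ring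
    _ ≤ ‖A + μ • (1 : X →L[𝕜] X)‖ - 1 := by
      simpa [hx] using norm_apply_apply_le_of_norm_le_one hf.le (A + μ • 1) x
    _ ≤ ‖A + lam • (1 : X →L[𝕜] X)‖ - 1 := by
      gcongr; exact hmax (mem_sphere_zero_iff_norm.2 hμ)

lemma exists_approx_state_of_parallel [Nontrivial X] {A : X →L[𝕜] X} {lam : 𝕜}
    (hlam : ‖lam‖ = 1) (hpar : ‖A + lam • (1 : X →L[𝕜] X)‖ = ‖A‖ + 1) {δ : ℝ} (hδ0 : 0 < δ)
    (hδ1 : δ ≤ 1) :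
    ∃ (x : X) (g : X →L[𝕜] 𝕜), ‖x‖ = 1 ∧ ‖g‖ ≤ 1 ∧ 1 - δ ≤ re (g x) ∧ ‖A‖ - δ ≤ ‖g (A x)‖ := by
  set T := A + lam • (1 : X →L[𝕜] X)
  obtain ⟨x, hx, hTx⟩ := T.exists_norm_eq_one_lt_norm_apply (r := ‖A‖ + 1 - δ)
    (by linarith [norm_nonneg A]) (by linarith)
  obtain ⟨g₀, hg₀, hg₀T⟩ := exists_dual_vector' 𝕜 (T x)
  have hsplit : re (g₀ (A x)) + re (lam * g₀ x) = ‖T x‖ := by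
    simpa [T] using congrArg re hg₀T
  have hA : re (g₀ (A x)) ≤ ‖A‖ := (re_le_norm _).trans <| by
    simpa [hx] using norm_apply_apply_le_of_norm_le_one hg₀.le A x
  have hlam_x : re (lam * g₀ x) ≤ 1 := (re_le_norm _).trans <| by
    rw [norm_mul, hlam, one_mul]
    exact (g₀.unit_le_opNorm x hx.le).trans hg₀.le
  refine ⟨x, lam • g₀, hx, by rw [norm_smul, hlam, hg₀, one_mul], ?_, ?_⟩
  · simp only [smul_apply, smul_eq_mul]
    linarith
  · rw [smul_apply, norm_smul, hlam, one_mul]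
    linarith [re_le_norm (g₀ (A x))]

end NumRadius

section Parallel

variable {𝕜 X : Type*} [RCLike 𝕜] [NormedAddCommGroup X] [NormedSpace 𝕜 X] [CompleteSpace X]
  [Nontrivial X] {A : X →L[𝕜] X} {lam : 𝕜}

lemma norm_sub_le_numRadius_of_parallel (hlam : ‖lam‖ = 1)
    (hpar : ‖A + lam • (1 : X →L[𝕜] X)‖ = ‖A‖ + 1) {ε : ℝ} (hε0 : 0 < ε) (hε1 : ε < 1) :
    ‖A‖ - ε * (ε + 3 * ‖A‖) ≤ numRadius A := by
  let _ : Module ℝ X := RestrictScalars.module ℝ 𝕜 X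
  let _ : IsScalarTower ℝ 𝕜 X := RestrictScalars.isScalarTower ℝ 𝕜 X
  let _ : NormedSpace ℝ X := NormedSpace.restrictScalars ℝ 𝕜 X
  obtain ⟨x, g, hx, hg, hgx, hgAx⟩ :=
    exists_approx_state_of_parallel hlam hpar (pow_pos hε0 2) (by nlinarith)
  obtain ⟨y, h, hy, hh, hhy, hhg, hyx⟩ := bishop_phelps_bollobas_rclike hg hx hε0 hε1 hgx
  have hmove : ‖g (A (x - y))‖ ≤ 2 * ε * ‖A‖ := by
    have := norm_apply_apply_le_of_norm_le_one hg A (x - y)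
    rw [norm_sub_rev] at this
    nlinarith [norm_nonneg A]
  have hswap : ‖(g - h) (A y)‖ ≤ ε * ‖A‖ := by
    have := (g - h).le_opNorm (A y)
    rw [norm_sub_rev] at this
    nlinarith [A.unit_le_opNorm y hy.le, norm_nonneg (h - g), norm_nonneg (A y)]
  have hsplit : g (A x) = g (A (x - y)) + (g - h) (A y) + h (A y) := by
    simp only [map_sub, sub_apply]; abel
  have htri : ‖g (A x)‖ ≤ 2 * ε * ‖A‖ + ε * ‖A‖ + ‖h (A y)‖ := by
    rw [hsplit]
    exact norm_add₃_le.trans (by gcongr)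
  linarith [le_numRadius A hy hh hhy]

lemma norm_le_numRadius_of_parallel (hlam : ‖lam‖ = 1)
    (hpar : ‖A + lam • (1 : X →L[𝕜] X)‖ = ‖A‖ + 1) : ‖A‖ ≤ numRadius A := by
  have hlim : Tendsto (fun ε : ℝ => ‖A‖ - ε * (ε + 3 * ‖A‖)) (𝓝[>] 0) (𝓝 ‖A‖) := by
    refine tendsto_nhdsWithin_of_tendsto_nhds ?_
    simpa using (by fun_prop : Continuous fun ε : ℝ => ‖A‖ - ε * (ε + 3 * ‖A‖)).tendsto 0
  refine le_of_tendsto hlim ?_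
  filter_upwards [Ioo_mem_nhdsGT one_pos] with ε hε
  exact norm_sub_le_numRadius_of_parallel hlam hpar hε.1 hε.2

end Parallel

theorem parallel_to_identity_iff_norm_eq_numRadius
    {𝕜 X : Type*} [RCLike 𝕜] [NormedAddCommGroup X] [NormedSpace 𝕜 X]
    [CompleteSpace X] [Nontrivial X] (A : X →L[𝕜] X) :
    (∃ lam : 𝕜, ‖lam‖ = 1 ∧ ‖A + lam • (1 : X →L[𝕜] X)‖ = ‖A‖ + 1) ↔
      ‖A‖ = numRadius A := by
  constructor
  · rintro ⟨lam, hlam, hpar⟩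
    exact (norm_le_numRadius_of_parallel hlam hpar).antisymm (numRadius_le_norm A)
  · intro hA
    obtain ⟨lam, hlam, hle⟩ := exists_numRadius_add_one_le A
    refine ⟨lam, hlam, le_antisymm ?_ (by rwa [hA])⟩
    calc ‖A + lam • (1 : X →L[𝕜] X)‖ ≤ ‖A‖ + ‖lam‖ * ‖(1 : X →L[𝕜] X)‖ :=
          (norm_add_le _ _).trans_eq (by rw [norm_smul])
      _ = ‖A‖ + 1 := by rw [hlam, norm_one, one_mul]
end

section
/- Let Y be a Banach space over 𝕂 ∈ {ℝ, ℂ} satisfying the local uniform convexity condition, let X be a nonzero closed linear subspace of Y, let J : X → Y denote the inclusion operator (Jx = x for all x ∈ X, so ‖J‖ = 1), and let A : X → Y be a compact linear operator. Then the following are equivalent: (i) A is norm-parallel to J, i.e. there exists λ with |λ| = 1 such that ‖A + λ·J‖ = ‖A‖ + 1; (ii) there exist λ with |λ| = 1 and a nonzero x ∈ X such that A x = λ·‖A‖·x, i.e. λ‖A‖ is an eigenvalue of A. -/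
/-!
Let `J` be the inclusion and `A ≠ 0`. If `‖A + λJ‖ = ‖A‖ + 1`, take a norming sequence `uₙ` of
`A + λJ` in the unit ball; by compactness `A uₙ → y` along a subsequence, so
`‖y + λuₙ‖ → ‖A‖ + 1`. This forces `‖y‖ = ‖A‖` and `‖y / ‖A‖ + λuₙ‖ → 2`, and local uniform
convexity at the unit vector `y / ‖A‖` gives `λuₙ → y / ‖A‖`. Hence `uₙ` converges in the closed
subspace `X` to some `x` with `A x = y = λ‖A‖x`. Conversely, an eigenvector `x` for `λ‖A‖` is
mapped by `A + λJ` to a vector of norm `(‖A‖ + 1)‖x‖`.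
-/

open Filter Topology

section NormedSpace

variable {𝕜 E : Type*} [RCLike 𝕜]

theorem tendsto_norm_add_of_tendsto [SeminormedAddCommGroup E] {ι : Type*} {l : Filter ι}
    {a b : ι → E} {y : E} {r : ℝ} (ha : Tendsto a l (𝓝 y))
    (hab : Tendsto (fun i => ‖a i + b i‖) l (𝓝 r)) :
    Tendsto (fun i => ‖y + b i‖) l (𝓝 r) := by
  refine tendsto_of_tendsto_of_dist hab (squeeze_zero (fun _ => dist_nonneg) (fun i => ?_)
    (tendsto_iff_norm_sub_tendsto_zero.1 ha))
  calc dist ‖a i + b i‖ ‖y + b i‖ ≤ ‖(a i + b i) - (y + b i)‖ := dist_norm_norm_le _ _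
    _ = ‖a i - y‖ := by rw [add_sub_add_right_eq_sub]

variable [SeminormedAddCommGroup E] [NormedSpace 𝕜 E]

theorem norm_add_le_mul_norm_inv_smul_add_inv_smul {α β : ℝ} (hα : 0 < α) (hαβ : α ≤ β)
    (a : E) {b : E} (hb : ‖b‖ ≤ β) :
    ‖a + b‖ ≤ α * ‖(α : 𝕜)⁻¹ • a + (β : 𝕜)⁻¹ • b‖ + (β - α) := by
  have hβ : 0 < β := hα.trans_le hαβ
  have hc : 0 ≤ 1 - α / β := sub_nonneg.2 ((div_le_one hβ).2 hαβ)
  have hsplit :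
      a + b = (α : 𝕜) • ((α : 𝕜)⁻¹ • a + (β : 𝕜)⁻¹ • b) + ((1 - α / β : ℝ) : 𝕜) • b := by
    have hα' : (α : 𝕜) ≠ 0 := RCLike.ofReal_ne_zero.2 hα.ne'
    have hβ' : (β : 𝕜) ≠ 0 := RCLike.ofReal_ne_zero.2 hβ.ne'
    have hcoef : (α : 𝕜) * (β : 𝕜)⁻¹ + ((1 - α / β : ℝ) : 𝕜) = 1 := by push_cast; field_simp; ring
    rw [smul_add, smul_inv_smul₀ hα', smul_smul]
    linear_combination (norm := module) -hcoef • b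
  calc ‖a + b‖ ≤ α * ‖(α : 𝕜)⁻¹ • a + (β : 𝕜)⁻¹ • b‖ + (1 - α / β) * ‖b‖ := by
        rw [hsplit]
        refine (norm_add_le _ _).trans_eq ?_
        rw [norm_smul, norm_smul, RCLike.norm_ofReal, RCLike.norm_ofReal, abs_of_pos hα,
          abs_of_nonneg hc]
    _ ≤ α * ‖(α : 𝕜)⁻¹ • a + (β : 𝕜)⁻¹ • b‖ + (1 - α / β) * β := by gcongr
    _ = α * ‖(α : 𝕜)⁻¹ • a + (β : 𝕜)⁻¹ • b‖ + (β - α) := by field_simp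

theorem norm_inv_smul_le_one {α : ℝ} (hα : 0 < α) {a : E} (ha : ‖a‖ ≤ α) :
    ‖(α : 𝕜)⁻¹ • a‖ ≤ 1 := by
  rw [norm_smul, norm_inv, RCLike.norm_ofReal, abs_of_pos hα]
  exact inv_mul_le_one_of_le₀ ha hα.le

theorem tendsto_norm_inv_smul_add_inv_smul {ι : Type*} {l : Filter ι} {a b : ι → E} {α β : ℝ}
    (hα : 0 < α) (hβ : 0 < β) (ha : ∀ i, ‖a i‖ ≤ α) (hb : ∀ i, ‖b i‖ ≤ β)
    (hab : Tendsto (fun i => ‖a i + b i‖) l (𝓝 (α + β))) :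
    Tendsto (fun i => ‖(α : 𝕜)⁻¹ • a i + (β : 𝕜)⁻¹ • b i‖) l (𝓝 2) := by
  wlog hαβ : α ≤ β generalizing a b α β
  · simpa only [add_comm] using
      this hβ hα hb ha (by simpa only [add_comm] using hab) (le_of_not_ge hαβ)
  have hlower : Tendsto (fun i => (‖a i + b i‖ - (β - α)) / α) l (𝓝 2) := by
    convert (hab.sub_const (β - α)).div_const α using 2
    field_simp
    ring
  refine tendsto_of_tendsto_of_tendsto_of_le_of_le hlower tendsto_const_nhds (fun i => ?_)
    (fun i => ?_)
  · rw [div_le_iff₀' hα]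
    linarith [norm_add_le_mul_norm_inv_smul_add_inv_smul (𝕜 := 𝕜) hα hαβ (a i) (hb i)]
  · calc _ ≤ ‖(α : 𝕜)⁻¹ • a i‖ + ‖(β : 𝕜)⁻¹ • b i‖ := norm_add_le _ _
      _ ≤ 1 + 1 := add_le_add (norm_inv_smul_le_one hα (ha i)) (norm_inv_smul_le_one hβ (hb i))
      _ = 2 := one_add_one_eq_two

end NormedSpace

section Operator

variable {𝕜₁ 𝕜₂ E F : Type*} [DenselyNormedField 𝕜₁] [NontriviallyNormedField 𝕜₂]
  {σ₁₂ : 𝕜₁ →+* 𝕜₂} [NormedAddCommGroup E] [SeminormedAddCommGroup F]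
  [NormedSpace 𝕜₁ E] [NormedSpace 𝕜₂ F]

theorem ContinuousLinearMap.exists_seq_tendsto_norm_apply [RingHomIsometric σ₁₂]
    (f : E →SL[σ₁₂] F) :
    ∃ v : ℕ → E, (∀ n, ‖v n‖ ≤ 1) ∧ Tendsto (fun n => ‖f (v n)‖) atTop (𝓝 ‖f‖) := by
  obtain ⟨r, -, hr, hrS⟩ := exists_seq_tendsto_sSup
    ((Metric.nonempty_closedBall.2 zero_le_one).image fun x => ‖f x‖)
    ⟨‖f‖, by rintro - ⟨x, hx, rfl⟩; exact f.unit_le_opNorm x (mem_closedBall_zero_iff.1 hx)⟩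
  choose v hv hfv using hrS
  rw [f.sSup_unitClosedBall_eq_norm] at hr
  exact ⟨v, fun n => mem_closedBall_zero_iff.1 (hv n), by simpa only [hfv] using hr⟩

theorem IsCompactOperator.exists_subseq_tendsto {f : E →SL[σ₁₂] F} (hf : IsCompactOperator f)
    {v : ℕ → E} {r : ℝ} (hv : ∀ n, ‖v n‖ ≤ r) :
    ∃ y : F, ∃ φ : ℕ → ℕ, StrictMono φ ∧ Tendsto (fun n => f (v (φ n))) atTop (𝓝 y) := by
  obtain ⟨K, hK, hfK⟩ := hf.image_closedBall_subset_compact (f := (f : E →ₛₗ[σ₁₂] F)) r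
  obtain ⟨y, -, φ, hφ, hy⟩ :=
    hK.tendsto_subseq fun n => hfK ⟨v n, mem_closedBall_zero_iff.2 (hv n), rfl⟩
  exact ⟨y, φ, hφ, hy⟩

theorem IsCompactOperator.exists_seq_tendsto_norm_add [RingHomIsometric σ₁₂]
    {f : E →SL[σ₁₂] F} (hf : IsCompactOperator f) (g : E →SL[σ₁₂] F) :
    ∃ (u : ℕ → E) (y : F), (∀ n, ‖u n‖ ≤ 1) ∧ Tendsto (fun n => f (u n)) atTop (𝓝 y) ∧
      Tendsto (fun n => ‖y + g (u n)‖) atTop (𝓝 ‖f + g‖) := by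
  obtain ⟨v, hv, hfgv⟩ := (f + g).exists_seq_tendsto_norm_apply
  obtain ⟨y, φ, hφ, hy⟩ := hf.exists_subseq_tendsto hv
  exact ⟨v ∘ φ, y, fun n => hv (φ n), hy,
    tendsto_norm_add_of_tendsto hy (hfgv.comp hφ.tendsto_atTop)⟩

end Operator

def LocallyUniformlyConvex (Y : Type*) [SeminormedAddCommGroup Y] : Prop :=
  ∀ y : Y, ‖y‖ = 1 → ∀ yn : ℕ → Y, (∀ n, ‖yn n‖ ≤ 1) →
    Tendsto (fun n => ‖yn n + y‖) atTop (𝓝 2) → Tendsto yn atTop (𝓝 y)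

theorem LocallyUniformlyConvex.tendsto_of_tendsto_norm_add {𝕜 Y : Type*} [RCLike 𝕜]
    [SeminormedAddCommGroup Y] [NormedSpace 𝕜 Y] (hY : LocallyUniformlyConvex Y) {y : Y}
    {b : ℕ → Y} {α : ℝ} (hα : 0 < α) (hy : ‖y‖ ≤ α) (hb : ∀ n, ‖b n‖ ≤ 1)
    (hyb : Tendsto (fun n => ‖y + b n‖) atTop (𝓝 (α + 1))) :
    ‖y‖ = α ∧ Tendsto b atTop (𝓝 ((α : 𝕜)⁻¹ • y)) := by
  have hyα : ‖y‖ = α := by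
    refine le_antisymm hy ?_
    have := le_of_tendsto' hyb fun n => (norm_add_le _ _).trans (add_le_add_right (hb n) _)
    linarith
  refine ⟨hyα, hY _ ?_ b hb ?_⟩
  · rw [norm_smul, norm_inv, RCLike.norm_ofReal, abs_of_pos hα, hyα, inv_mul_cancel₀ hα.ne']
  · simpa [add_comm] using
      tendsto_norm_inv_smul_add_inv_smul (𝕜 := 𝕜) hα one_pos (fun _ => hy) hb hyb

theorem exists_apply_eq_smul_of_norm_add_smul_subtypeL_eq {𝕜 Y : Type*} [RCLike 𝕜]
    [NormedAddCommGroup Y] [NormedSpace 𝕜 Y] (hY : LocallyUniformlyConvex Y)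
    {X : Submodule 𝕜 Y} (hXc : IsClosed (X : Set Y)) {A : X →L[𝕜] Y}
    (hA : IsCompactOperator A) (hA0 : A ≠ 0) {lam : 𝕜} (hlam : ‖lam‖ = 1)
    (hpar : ‖A + lam • X.subtypeL‖ = ‖A‖ + 1) :
    ∃ x : X, x ≠ 0 ∧ A x = (lam * ‖A‖) • (x : Y) := by
  obtain ⟨u, y, hu, hAu, hyu⟩ := hA.exists_seq_tendsto_norm_add (lam • X.subtypeL)
  have hApos : 0 < ‖A‖ := norm_pos_iff.2 hA0
  have hy : ‖y‖ ≤ ‖A‖ := le_of_tendsto' hAu.norm fun n => A.unit_le_opNorm _ (hu n)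
  obtain ⟨hyA, hlim⟩ := hY.tendsto_of_tendsto_norm_add (𝕜 := 𝕜) hApos hy
    (b := fun n => lam • (u n : Y)) (fun n => by simpa [norm_smul, hlam] using hu n)
    (by simpa [hpar] using hyu)
  have hlam0 : lam ≠ 0 := norm_ne_zero_iff.1 (by simp [hlam])
  set p : Y := lam⁻¹ • (‖A‖ : 𝕜)⁻¹ • y
  have hup : Tendsto (fun n => (u n : Y)) atTop (𝓝 p) := by
    simpa [p, smul_smul, inv_mul_cancel₀ hlam0] using hlim.const_smul lam⁻¹
  have hpX : p ∈ X := hXc.mem_of_tendsto hup (Eventually.of_forall fun n => (u n).2)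
  have hAp : A ⟨p, hpX⟩ = y :=
    tendsto_nhds_unique ((A.continuous.tendsto _).comp (tendsto_subtype_rng.2 hup)) hAu
  refine ⟨⟨p, hpX⟩, ?_, ?_⟩
  · have hy0 : y ≠ 0 := by
      rintro rfl
      exact hApos.ne (by simpa using hyA)
    simpa [p, hlam0, hApos.ne'] using hy0
  · have hA' : (‖A‖ : 𝕜) ≠ 0 := RCLike.ofReal_ne_zero.2 hApos.ne'
    rw [hAp, smul_smul, smul_smul, mul_assoc, mul_mul_mul_comm, mul_inv_cancel₀ hlam0,
      mul_inv_cancel₀ hA', one_mul, one_smul]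

theorem norm_add_smul_subtypeL_eq_of_apply_eq_smul {𝕜 Y : Type*} [RCLike 𝕜]
    [NormedAddCommGroup Y] [NormedSpace 𝕜 Y] {X : Submodule 𝕜 Y} (A : X →L[𝕜] Y) {lam : 𝕜}
    (hlam : ‖lam‖ = 1) {x : X} (hx : x ≠ 0) (hAx : A x = (lam * ‖A‖) • (x : Y)) :
    ‖A + lam • X.subtypeL‖ = ‖A‖ + 1 := by
  refine le_antisymm ?_ ?_
  · calc ‖A + lam • X.subtypeL‖ ≤ ‖A‖ + ‖lam‖ * ‖X.subtypeL‖ :=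
          (norm_add_le _ _).trans (add_le_add_right (ContinuousLinearMap.opNorm_smul_le _ _) _)
      _ ≤ ‖A‖ + 1 := by
          rw [hlam, one_mul]
          exact add_le_add_right X.norm_subtypeL_le _
  · have hTx : (A + lam • X.subtypeL) x = (lam * ((‖A‖ + 1 : ℝ) : 𝕜)) • (x : Y) := by
      simp [hAx, mul_add, add_smul]
    have hnorm : ‖(A + lam • X.subtypeL) x‖ = (‖A‖ + 1) * ‖x‖ := by
      rw [hTx, norm_smul, norm_mul, hlam, one_mul, RCLike.norm_ofReal,
        abs_of_nonneg (by positivity), Submodule.coe_norm]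
    have hratio := (A + lam • X.subtypeL).ratio_le_opNorm x
    rwa [hnorm, mul_div_cancel_right₀ _ (norm_ne_zero_iff.2 hx)] at hratio

theorem compact_parallel_to_inclusion_iff_eigenvalue_general
    {𝕜 Y : Type*} [RCLike 𝕜] [NormedAddCommGroup Y] [NormedSpace 𝕜 Y]
    (hY : ∀ y : Y, ‖y‖ = 1 → ∀ yn : ℕ → Y, (∀ n, ‖yn n‖ ≤ 1) →
      Tendsto (fun n => ‖yn n + y‖) atTop (𝓝 2) → Tendsto yn atTop (𝓝 y))
    (X : Subspace 𝕜 Y) (hXc : IsClosed (X : Set Y))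
    (A : X →L[𝕜] Y) (hA : IsCompactOperator A) :
    (∃ lam : 𝕜, ‖lam‖ = 1 ∧ ‖A + lam • X.subtypeL‖ = ‖A‖ + 1) ↔
      ∃ (lam : 𝕜) (x : X), ‖lam‖ = 1 ∧ x ≠ 0 ∧ A x = (lam * (‖A‖ : 𝕜)) • (x : Y) := by
  constructor
  · rintro ⟨lam, hlam, hpar⟩
    by_cases hA0 : A = 0
    · subst hA0
      obtain ⟨x, hx⟩ := DFunLike.ne_iff.1 (show lam • X.subtypeL ≠ 0 by
        rintro h
        simp [h] at hpar)
      exact ⟨lam, x, hlam, by rintro rfl; simp at hx, by simp⟩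
    · obtain ⟨x, hx0, hAx⟩ :=
        exists_apply_eq_smul_of_norm_add_smul_subtypeL_eq hY hXc hA hA0 hlam hpar
      exact ⟨lam, x, hlam, hx0, hAx⟩
  · rintro ⟨lam, x, hlam, hx0, hAx⟩
    exact ⟨lam, hlam, norm_add_smul_subtypeL_eq_of_apply_eq_smul A hlam hx0 hAx⟩

theorem compact_parallel_to_inclusion_iff_eigenvalue
    {𝕜 Y : Type*} [RCLike 𝕜] [NormedAddCommGroup Y] [NormedSpace 𝕜 Y] [CompleteSpace Y]
    (hY : ∀ y : Y, ‖y‖ = 1 → ∀ yn : ℕ → Y, (∀ n, ‖yn n‖ ≤ 1) →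
      Tendsto (fun n => ‖yn n + y‖) atTop (𝓝 2) → Tendsto yn atTop (𝓝 y))
    (X : Subspace 𝕜 Y) (hXc : IsClosed (X : Set Y)) (hX0 : X ≠ ⊥)
    (A : X →L[𝕜] Y) (hA : IsCompactOperator A) :
    (∃ lam : 𝕜, ‖lam‖ = 1 ∧ ‖A + lam • X.subtypeL‖ = ‖A‖ + 1) ↔
      ∃ (lam : 𝕜) (x : X), ‖lam‖ = 1 ∧ x ≠ 0 ∧ A x = (lam * (‖A‖ : 𝕜)) • (x : Y) :=
  compact_parallel_to_inclusion_iff_eigenvalue_general hY X hXc A hA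
end

section
/- Let X be a Banach space over 𝕂 ∈ {ℝ, ℂ} satisfying the local uniform convexity condition, and let A be a compact linear operator on X such that A^{m−1} ≠ 0 and A^m = 0 for some natural number m. Then for all integers k, j with 1 ≤ k < j ≤ m − 1, the operator A^k is not norm-parallel to A^j. -/
open Filter Topology

/-- Strict convexity consequence of the local uniform convexity hypothesis,
in the case `‖u‖ ≤ ‖v‖`. -/
lemma strict_aux_le {𝕜 X : Type*} [RCLike 𝕜] [NormedAddCommGroup X] [NormedSpace 𝕜 X]
    (hX : ∀ x : X, ‖x‖ = 1 → ∀ xn : ℕ → X, (∀ n, ‖xn n‖ ≤ 1) →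
      Tendsto (fun n => ‖xn n + x‖) atTop (𝓝 2) → Tendsto xn atTop (𝓝 x))
    (u v : X) (hu : u ≠ 0) (hv : v ≠ 0) (hle : ‖u‖ ≤ ‖v‖)
    (h : ‖u + v‖ = ‖u‖ + ‖v‖) :
    ((‖u‖⁻¹ : ℝ) : 𝕜) • u = ((‖v‖⁻¹ : ℝ) : 𝕜) • v := by
  have ha : (0:ℝ) < ‖u‖ := norm_pos_iff.mpr hu
  have hb : (0:ℝ) < ‖v‖ := norm_pos_iff.mpr hv
  set a := ‖u‖ with hadef
  set b := ‖v‖ with hbdef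
  set x : X := ((a⁻¹ : ℝ) : 𝕜) • u with hxdef
  set y : X := ((b⁻¹ : ℝ) : 𝕜) • v with hydef
  have hnx : ‖x‖ = 1 := by
    rw [hxdef, norm_smul, RCLike.norm_ofReal, abs_of_pos (inv_pos.mpr ha), ← hadef,
      inv_mul_cancel₀ ha.ne']
  have hny : ‖y‖ = 1 := by
    rw [hydef, norm_smul, RCLike.norm_ofReal, abs_of_pos (inv_pos.mpr hb), ← hbdef,
      inv_mul_cancel₀ hb.ne']
  have hinv : b⁻¹ ≤ a⁻¹ := inv_anti₀ ha hle
  have hdecomp : x + y = ((a⁻¹ : ℝ) : 𝕜) • (u + v) + (((b⁻¹ - a⁻¹ : ℝ)) : 𝕜) • v := by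
    rw [RCLike.ofReal_sub, sub_smul, smul_add]
    abel
  have hlow : (2:ℝ) ≤ ‖x + y‖ := by
    have h1 : ‖((a⁻¹ : ℝ) : 𝕜) • (u + v)‖ = a⁻¹ * (a + b) := by
      rw [norm_smul, RCLike.norm_ofReal, abs_of_pos (inv_pos.mpr ha), h]
    have h2 : ‖(((b⁻¹ - a⁻¹ : ℝ)) : 𝕜) • v‖ = (a⁻¹ - b⁻¹) * b := by
      rw [norm_smul, RCLike.norm_ofReal, abs_of_nonpos (by linarith), neg_sub, ← hbdef]
    have e : ((a⁻¹ : ℝ) : 𝕜) • (u + v) = (x + y) + (-((((b⁻¹ - a⁻¹ : ℝ)) : 𝕜) • v)) := by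
      rw [hdecomp]; abel
    have h3 : ‖((a⁻¹ : ℝ) : 𝕜) • (u + v)‖ ≤ ‖x + y‖ + ‖(((b⁻¹ - a⁻¹ : ℝ)) : 𝕜) • v‖ := by
      calc ‖((a⁻¹ : ℝ) : 𝕜) • (u + v)‖
          = ‖(x + y) + (-((((b⁻¹ - a⁻¹ : ℝ)) : 𝕜) • v))‖ := by rw [e]
        _ ≤ ‖x + y‖ + ‖-((((b⁻¹ - a⁻¹ : ℝ)) : 𝕜) • v)‖ := norm_add_le _ _
        _ = ‖x + y‖ + ‖(((b⁻¹ - a⁻¹ : ℝ)) : 𝕜) • v‖ := by rw [norm_neg]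
    rw [h1, h2] at h3
    have hcalc : a⁻¹ * (a + b) - (a⁻¹ - b⁻¹) * b = 2 := by
      field_simp
      ring
    linarith
  have hup : ‖x + y‖ ≤ 2 := by
    calc ‖x + y‖ ≤ ‖x‖ + ‖y‖ := norm_add_le _ _
      _ = 2 := by rw [hnx, hny]; norm_num
  have hxy2 : ‖y + x‖ = 2 := by rw [add_comm]; linarith
  have := hX x hnx (fun _ => y) (fun _ => hny.le)
    (by rw [show (fun _ : ℕ => ‖y + x‖) = fun _ : ℕ => (2:ℝ) from funext fun _ => hxy2]
        exact tendsto_const_nhds)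
  exact (tendsto_nhds_unique tendsto_const_nhds this).symm

lemma strict_aux {𝕜 X : Type*} [RCLike 𝕜] [NormedAddCommGroup X] [NormedSpace 𝕜 X]
    (hX : ∀ x : X, ‖x‖ = 1 → ∀ xn : ℕ → X, (∀ n, ‖xn n‖ ≤ 1) →
      Tendsto (fun n => ‖xn n + x‖) atTop (𝓝 2) → Tendsto xn atTop (𝓝 x))
    (u v : X) (hu : u ≠ 0) (hv : v ≠ 0)
    (h : ‖u + v‖ = ‖u‖ + ‖v‖) :
    ((‖u‖⁻¹ : ℝ) : 𝕜) • u = ((‖v‖⁻¹ : ℝ) : 𝕜) • v := by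
  rcases le_total ‖u‖ ‖v‖ with hle | hle
  · exact strict_aux_le hX u v hu hv hle h
  · exact (strict_aux_le hX v u hv hu hle
      (by rw [add_comm v u, add_comm ‖v‖ ‖u‖]; exact h)).symm

theorem nilpotent_powers_not_parallel
    {𝕜 X : Type*} [RCLike 𝕜] [NormedAddCommGroup X] [NormedSpace 𝕜 X] [CompleteSpace X]
    (hX : ∀ x : X, ‖x‖ = 1 → ∀ xn : ℕ → X, (∀ n, ‖xn n‖ ≤ 1) →
      Tendsto (fun n => ‖xn n + x‖) atTop (𝓝 2) → Tendsto xn atTop (𝓝 x))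
    (A : X →L[𝕜] X) (hA : IsCompactOperator A) (m : ℕ)
    (hm1 : A ^ (m - 1) ≠ 0) (hm : A ^ m = 0)
    (k j : ℕ) (hk : 1 ≤ k) (hkj : k < j) (hj : j ≤ m - 1) :
    ¬ ∃ lam : 𝕜, ‖lam‖ = 1 ∧ ‖A ^ k + lam • A ^ j‖ = ‖A ^ k‖ + ‖A ^ j‖ := by
  rintro ⟨lam, hlam, heq⟩
  have hm3 : 3 ≤ m := by omega
  -- powers up to m-1 are nonzero
  have hpowne : ∀ i : ℕ, i ≤ m - 1 → A ^ i ≠ 0 := by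
    intro i hi h0
    apply hm1
    have : A ^ (m - 1) = A ^ i * A ^ (m - 1 - i) := by
      rw [← pow_add]; congr 1; omega
    rw [this, h0, zero_mul]
  have hTne : A ^ k ≠ 0 := hpowne k (by omega)
  have hSne : A ^ j ≠ 0 := hpowne j hj
  have hT0 : (0:ℝ) < ‖A ^ k‖ := norm_pos_iff.mpr hTne
  have hS0 : (0:ℝ) < ‖A ^ j‖ := norm_pos_iff.mpr hSne
  have hlamne : lam ≠ 0 := by
    intro h; rw [h, norm_zero] at hlam; norm_num at hlam
  -- choose a norming sequence
  have hex : ∀ n : ℕ, ∃ x : X, ‖x‖ < 1 ∧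
      ‖A ^ k‖ + ‖A ^ j‖ - 1 / (n + 1) < ‖(A ^ k + lam • A ^ j) x‖ := by
    intro n
    apply ContinuousLinearMap.exists_lt_apply_of_lt_opNorm
    rw [heq]
    have : (0:ℝ) < 1 / (n + 1) := by positivity
    linarith
  choose xn hxn1 hxn2 using hex
  have hxle : ∀ n, ‖xn n‖ ≤ 1 := fun n => (hxn1 n).le
  -- norms converge
  have hub : ∀ n, ‖(A ^ k + lam • A ^ j) (xn n)‖ ≤ ‖A ^ k‖ + ‖A ^ j‖ := by
    intro n
    calc ‖(A ^ k + lam • A ^ j) (xn n)‖ ≤ ‖A ^ k + lam • A ^ j‖ :=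
          (A ^ k + lam • A ^ j).unit_le_opNorm _ (hxle n)
      _ = ‖A ^ k‖ + ‖A ^ j‖ := heq
  have hlowtend : Tendsto (fun n : ℕ => ‖A ^ k‖ + ‖A ^ j‖ - 1 / (n + 1)) atTop
      (𝓝 (‖A ^ k‖ + ‖A ^ j‖)) := by
    have h0 : Tendsto (fun n : ℕ => 1 / ((n : ℝ) + 1)) atTop (𝓝 0) :=
      tendsto_one_div_add_atTop_nhds_zero_nat
    have := (tendsto_const_nhds : Tendsto (fun _ : ℕ => ‖A ^ k‖ + ‖A ^ j‖) atTop _).sub h0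
    simpa using this
  have htend : Tendsto (fun n => ‖(A ^ k + lam • A ^ j) (xn n)‖) atTop
      (𝓝 (‖A ^ k‖ + ‖A ^ j‖)) :=
    tendsto_of_tendsto_of_tendsto_of_le_of_le hlowtend tendsto_const_nhds
      (fun n => (hxn2 n).le) hub
  have happ : ∀ n, (A ^ k + lam • A ^ j) (xn n) = (A ^ k) (xn n) + lam • (A ^ j) (xn n) := by
    intro n; simp
  have hTk : Tendsto (fun n => ‖(A ^ k) (xn n)‖) atTop (𝓝 ‖A ^ k‖) := by
    have hlow' : ∀ n, ‖(A ^ k + lam • A ^ j) (xn n)‖ - ‖A ^ j‖ ≤ ‖(A ^ k) (xn n)‖ := by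
      intro n
      have h1 : ‖lam • (A ^ j) (xn n)‖ ≤ ‖A ^ j‖ := by
        rw [norm_smul, hlam, one_mul]
        exact (A ^ j).unit_le_opNorm _ (hxle n)
      have h2 : ‖(A ^ k + lam • A ^ j) (xn n)‖ ≤ ‖(A ^ k) (xn n)‖ + ‖lam • (A ^ j) (xn n)‖ := by
        rw [happ n]; exact norm_add_le _ _
      linarith
    have hlt : Tendsto (fun n => ‖(A ^ k + lam • A ^ j) (xn n)‖ - ‖A ^ j‖) atTop
        (𝓝 ‖A ^ k‖) := by
      have := htend.sub (tendsto_const_nhds : Tendsto (fun _ : ℕ => ‖A ^ j‖) atTop _)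
      simpa using this
    exact tendsto_of_tendsto_of_tendsto_of_le_of_le hlt tendsto_const_nhds hlow'
      (fun n => (A ^ k).unit_le_opNorm _ (hxle n))
  have hSj : Tendsto (fun n => ‖(A ^ j) (xn n)‖) atTop (𝓝 ‖A ^ j‖) := by
    have hlow' : ∀ n, ‖(A ^ k + lam • A ^ j) (xn n)‖ - ‖A ^ k‖ ≤ ‖(A ^ j) (xn n)‖ := by
      intro n
      have h1 : ‖(A ^ k) (xn n)‖ ≤ ‖A ^ k‖ := (A ^ k).unit_le_opNorm _ (hxle n)
      have h2 : ‖(A ^ k + lam • A ^ j) (xn n)‖ ≤ ‖(A ^ k) (xn n)‖ + ‖lam • (A ^ j) (xn n)‖ := by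
        rw [happ n]; exact norm_add_le _ _
      have h3 : ‖lam • (A ^ j) (xn n)‖ = ‖(A ^ j) (xn n)‖ := by
        rw [norm_smul, hlam, one_mul]
      linarith
    have hlt : Tendsto (fun n => ‖(A ^ k + lam • A ^ j) (xn n)‖ - ‖A ^ k‖) atTop
        (𝓝 ‖A ^ j‖) := by
      have := htend.sub (tendsto_const_nhds : Tendsto (fun _ : ℕ => ‖A ^ k‖) atTop _)
      have e : ‖A ^ k‖ + ‖A ^ j‖ - ‖A ^ k‖ = ‖A ^ j‖ := by ring
      rwa [e] at this
    exact tendsto_of_tendsto_of_tendsto_of_le_of_le hlt tendsto_const_nhds hlow'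
      (fun n => (A ^ j).unit_le_opNorm _ (hxle n))
  -- powers are compact operators
  have hpowcompact : ∀ i : ℕ, 1 ≤ i → IsCompactOperator (A ^ i : X →L[𝕜] X) := by
    intro i hi
    obtain ⟨i, rfl⟩ : ∃ i', i = i' + 1 := ⟨i - 1, by omega⟩
    have : ⇑(A ^ (i + 1)) = ⇑(A ^ i) ∘ ⇑A := by
      ext x; rw [pow_succ, ContinuousLinearMap.mul_apply]; rfl
    rw [this]
    exact hA.clm_comp (A ^ i)
  -- extract convergent subsequences
  obtain ⟨K, hK, hKsub⟩ := (hpowcompact k hk).image_subset_compact_of_bounded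
    (Metric.isBounded_closedBall (x := (0:X)) (r := 1))
  have hmemK : ∀ n, (A ^ k) (xn n) ∈ K := fun n =>
    hKsub ⟨xn n, mem_closedBall_zero_iff.mpr (hxle n), rfl⟩
  obtain ⟨u, -, φ, hφ, hu⟩ := hK.tendsto_subseq hmemK
  obtain ⟨K', hK', hKsub'⟩ := (hpowcompact j (by omega)).image_subset_compact_of_bounded
    (Metric.isBounded_closedBall (x := (0:X)) (r := 1))
  have hmemK' : ∀ n, (A ^ j) (xn (φ n)) ∈ K' := fun n =>
    hKsub' ⟨xn (φ n), mem_closedBall_zero_iff.mpr (hxle _), rfl⟩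
  obtain ⟨w, -, ψ, hψ, hw⟩ := hK'.tendsto_subseq hmemK'
  set z : ℕ → X := fun n => xn (φ (ψ n)) with hzdef
  have hzu : Tendsto (fun n => (A ^ k) (z n)) atTop (𝓝 u) :=
    hu.comp hψ.tendsto_atTop
  have hzw : Tendsto (fun n => (A ^ j) (z n)) atTop (𝓝 w) := hw
  have hsub : Tendsto (φ ∘ ψ) atTop atTop := (hφ.comp hψ).tendsto_atTop
  -- limit norms
  have hnu : ‖u‖ = ‖A ^ k‖ :=
    tendsto_nhds_unique (hzu.norm) (hTk.comp hsub)
  have hnw : ‖w‖ = ‖A ^ j‖ :=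
    tendsto_nhds_unique (hzw.norm) (hSj.comp hsub)
  have hune : u ≠ 0 := by intro h; rw [h, norm_zero] at hnu; linarith
  have hwne : w ≠ 0 := by intro h; rw [h, norm_zero] at hnw; linarith
  have hlamw : lam • w ≠ 0 := smul_ne_zero hlamne hwne
  -- norm additivity of the limits
  have hsumnorm : ‖u + lam • w‖ = ‖u‖ + ‖lam • w‖ := by
    have h1 : Tendsto (fun n => ‖(A ^ k + lam • A ^ j) (z n)‖) atTop (𝓝 ‖u + lam • w‖) := by
      have := (hzu.add (hzw.const_smul lam)).norm
      refine this.congr fun n => ?_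
      rw [happ]
    have h2 : Tendsto (fun n => ‖(A ^ k + lam • A ^ j) (z n)‖) atTop
        (𝓝 (‖A ^ k‖ + ‖A ^ j‖)) := htend.comp hsub
    have h3 := tendsto_nhds_unique h1 h2
    rw [h3, hnu, norm_smul, hlam, one_mul, hnw]
  -- strict convexity gives proportionality
  have hprop := strict_aux (𝕜 := 𝕜) hX u (lam • w) hune hlamw hsumnorm
  have hnlamw : ‖lam • w‖ = ‖A ^ j‖ := by rw [norm_smul, hlam, one_mul, hnw]
  rw [hnu, hnlamw] at hprop
  -- derive w = μ • u
  set μ : 𝕜 := lam⁻¹ * (((‖A ^ j‖ : ℝ) : 𝕜) * ((‖A ^ k‖⁻¹ : ℝ) : 𝕜)) with hμdef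
  have hμne : μ ≠ 0 := by
    apply mul_ne_zero (inv_ne_zero hlamne)
    apply mul_ne_zero
    · exact_mod_cast (RCLike.ofReal_ne_zero (K := 𝕜)).mpr hS0.ne'
    · exact_mod_cast (RCLike.ofReal_ne_zero (K := 𝕜)).mpr (inv_ne_zero hT0.ne')
  have hweq : w = μ • u := by
    have h1 : ((‖A ^ j‖ : ℝ) : 𝕜) • (((‖A ^ k‖⁻¹ : ℝ) : 𝕜) • u)
        = ((‖A ^ j‖ : ℝ) : 𝕜) • (((‖A ^ j‖⁻¹ : ℝ) : 𝕜) • (lam • w)) := by rw [hprop]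
    rw [smul_smul, smul_smul,
      show ((‖A ^ j‖ : ℝ) : 𝕜) * ((‖A ^ j‖⁻¹ : ℝ) : 𝕜) = 1 by
        rw [← RCLike.ofReal_mul, mul_inv_cancel₀ hS0.ne', RCLike.ofReal_one],
      one_smul] at h1
    have h2 : lam⁻¹ • (lam • w) = lam⁻¹ • ((((‖A ^ j‖ : ℝ) : 𝕜) * ((‖A ^ k‖⁻¹ : ℝ) : 𝕜)) • u) := by
      rw [h1]
    rw [smul_smul, inv_mul_cancel₀ hlamne, one_smul, smul_smul] at h2
    rw [h2, hμdef]
  -- u is an eigenvector of A^(j-k)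
  have heig : (A ^ (j - k)) u = μ • u := by
    have h1 : Tendsto (fun n => (A ^ (j - k)) ((A ^ k) (z n))) atTop
        (𝓝 ((A ^ (j - k)) u)) := ((A ^ (j - k)).continuous.tendsto u).comp hzu
    have h2 : (fun n => (A ^ (j - k)) ((A ^ k) (z n))) = fun n => (A ^ j) (z n) := by
      funext n
      rw [← ContinuousLinearMap.mul_apply, ← pow_add]
      congr 2
      omega
    rw [h2] at h1
    rw [tendsto_nhds_unique h1 hzw, hweq]
  -- iterate to get a contradiction with nilpotency
  have hiter : ∀ n : ℕ, (A ^ ((j - k) * n)) u = μ ^ n • u := by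
    intro n
    induction n with
    | zero => simp
    | succ n ih =>
      have h1 : A ^ ((j - k) * (n + 1)) = A ^ ((j - k) * n) * A ^ (j - k) := by
        rw [Nat.mul_succ, pow_add]
      rw [h1, ContinuousLinearMap.mul_apply, heig, map_smul, ih, smul_smul, pow_succ']
  have hzero : A ^ ((j - k) * m) = 0 := by
    have h1 : A ^ ((j - k) * m) = A ^ ((j - k) * m - m) * A ^ m := by
      rw [← pow_add]; congr 1
      have : 1 ≤ j - k := by omega
      have : m ≤ (j - k) * m := Nat.le_mul_of_pos_left m (by omega)
      omega
    rw [h1, hm, mul_zero]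
  have := hiter m
  rw [hzero] at this
  simp only [ContinuousLinearMap.zero_apply] at this
  rcases smul_eq_zero.mp this.symm with h | h
  · exact pow_ne_zero m hμne h
  · exact hune h
end

section
/- Let X be a Banach space over 𝕂 ∈ {ℝ, ℂ} satisfying the local uniform convexity condition, and let A, B be bounded linear operators on X with A² = A, B² = B, ‖A‖ = 1, ‖B‖ = 1, and such that the range A(X) of A is finite-dimensional. Then the following are equivalent: (i) A is norm-parallel to B; (ii) A(X) ∩ B(X) is a nontrivial subspace, i.e. there exists a nonzero vector y with Ay = y and By = y. -/
open Filter Topology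

theorem projections_parallel_iff_ranges_intersect
    {𝕜 X : Type*} [RCLike 𝕜] [NormedAddCommGroup X] [NormedSpace 𝕜 X] [CompleteSpace X]
    (hX : ∀ x : X, ‖x‖ = 1 → ∀ xn : ℕ → X, (∀ n, ‖xn n‖ ≤ 1) →
      Tendsto (fun n => ‖xn n + x‖) atTop (𝓝 2) → Tendsto xn atTop (𝓝 x))
    (A B : X →L[𝕜] X) (hA2 : A ^ 2 = A) (hB2 : B ^ 2 = B)
    (hAn : ‖A‖ = 1) (hBn : ‖B‖ = 1)
    (hfin : FiniteDimensional 𝕜 (LinearMap.range (A : X →ₗ[𝕜] X))) :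
    (∃ lam : 𝕜, ‖lam‖ = 1 ∧ ‖A + lam • B‖ = ‖A‖ + ‖B‖) ↔
      ∃ y : X, y ≠ 0 ∧ A y = y ∧ B y = y := by
  have hA2' : ∀ z : X, A (A z) = A z := by
    intro z
    have := DFunLike.congr_fun hA2 z
    simpa [pow_two, ContinuousLinearMap.mul_apply] using this
  have hB2' : ∀ z : X, B (B z) = B z := by
    intro z
    have := DFunLike.congr_fun hB2 z
    simpa [pow_two, ContinuousLinearMap.mul_apply] using this
  constructor
  · rintro ⟨lam, hlam, hpar⟩
    rw [hAn, hBn] at hpar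
    -- choose a norming sequence
    have hseq : ∀ n : ℕ, ∃ x : X, ‖x‖ ≤ 1 ∧ 2 - 1/(n+1) < ‖A x + lam • B x‖ := by
      intro n
      have h : 2 - 1/((n:ℝ)+1) < ‖A + lam • B‖ := by
        rw [hpar]
        have : (0:ℝ) < 1/((n:ℝ)+1) := by positivity
        linarith
      obtain ⟨x, hx1, hx2⟩ := (A + lam • B).exists_lt_apply_of_lt_opNorm h
      refine ⟨x, hx1.le, ?_⟩
      simpa [ContinuousLinearMap.add_apply, ContinuousLinearMap.smul_apply] using hx2
    choose x hx1 hx2 using hseq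
    -- bounds on the pieces
    have hAb : ∀ n, ‖A (x n)‖ ≤ 1 := fun n => by
      calc ‖A (x n)‖ ≤ ‖A‖ * ‖x n‖ := A.le_opNorm _
        _ ≤ 1 := by rw [hAn]; simpa using hx1 n
    have hBb : ∀ n, ‖lam • B (x n)‖ ≤ 1 := fun n => by
      rw [norm_smul, hlam, one_mul]
      calc ‖B (x n)‖ ≤ ‖B‖ * ‖x n‖ := B.le_opNorm _
        _ ≤ 1 := by rw [hBn]; simpa using hx1 n
    have hsum_le : ∀ n, ‖A (x n) + lam • B (x n)‖ ≤ 2 := fun n => by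
      calc ‖A (x n) + lam • B (x n)‖ ≤ ‖A (x n)‖ + ‖lam • B (x n)‖ := norm_add_le _ _
        _ ≤ 2 := by linarith [hAb n, hBb n]
    -- norm of the sum tends to 2
    have hlow : Tendsto (fun n : ℕ => 2 - 1/((n:ℝ)+1)) atTop (𝓝 2) := by
      have : Tendsto (fun n : ℕ => 1/((n:ℝ)+1)) atTop (𝓝 0) :=
        tendsto_one_div_add_atTop_nhds_zero_nat
      simpa using (tendsto_const_nhds (x := (2:ℝ))).sub this
    have hsum : Tendsto (fun n => ‖A (x n) + lam • B (x n)‖) atTop (𝓝 2) := by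
      refine tendsto_of_tendsto_of_tendsto_of_le_of_le hlow tendsto_const_nhds
        (fun n => (hx2 n).le) hsum_le
    -- ‖A (x n)‖ tends to 1
    have hAnorm : Tendsto (fun n => ‖A (x n)‖) atTop (𝓝 1) := by
      have hlo : ∀ n, ‖A (x n) + lam • B (x n)‖ - 1 ≤ ‖A (x n)‖ := fun n => by
        have := norm_add_le (A (x n)) (lam • B (x n))
        linarith [hBb n]
      have h1 : Tendsto (fun n => ‖A (x n) + lam • B (x n)‖ - 1) atTop (𝓝 1) := by
        have := hsum.sub (tendsto_const_nhds (x := (1:ℝ)))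
        norm_num at this ⊢
        exact this
      exact tendsto_of_tendsto_of_tendsto_of_le_of_le h1 tendsto_const_nhds hlo hAb
    -- extract a convergent subsequence of A (x n) in the finite-dimensional range
    set S := LinearMap.range (A : X →ₗ[𝕜] X) with hS
    haveI : FiniteDimensional 𝕜 S := hfin
    haveI : ProperSpace S := FiniteDimensional.proper 𝕜 S
    have hmem : ∀ n, A (x n) ∈ S := fun n => LinearMap.mem_range_self _ _
    set a : ℕ → S := fun n => ⟨A (x n), hmem n⟩ with ha
    have hball : ∀ n, a n ∈ Metric.closedBall (0 : S) 1 := fun n => by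
      simp only [Metric.mem_closedBall, dist_zero_right]
      exact hAb n
    obtain ⟨u, -, φ, hφ, hconv⟩ :=
      (isCompact_closedBall (0 : S) 1).tendsto_subseq hball
    have hAconv : Tendsto (fun k => A (x (φ k))) atTop (𝓝 (u : X)) :=
      ((continuous_subtype_val.tendsto u).comp hconv)
    have hu1 : ‖(u : X)‖ = 1 := by
      have h1 : Tendsto (fun k => ‖A (x (φ k))‖) atTop (𝓝 ‖(u : X)‖) :=
        hAconv.norm
      have h2 : Tendsto (fun k => ‖A (x (φ k))‖) atTop (𝓝 1) :=
        hAnorm.comp hφ.tendsto_atTop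
      exact tendsto_nhds_unique h1 h2
    -- ‖lam • B (x (φ k)) + u‖ → 2
    have hBu : Tendsto (fun k => ‖lam • B (x (φ k)) + (u : X)‖) atTop (𝓝 2) := by
      have hdiff : Tendsto (fun k => ‖(u : X) - A (x (φ k))‖) atTop (𝓝 0) := by
        have : Tendsto (fun k => (u : X) - A (x (φ k))) atTop (𝓝 0) := by
          simpa using (tendsto_const_nhds (x := (u:X))).sub hAconv
        simpa using this.norm
      have hsum' : Tendsto (fun k => ‖A (x (φ k)) + lam • B (x (φ k))‖) atTop (𝓝 2) :=
        hsum.comp hφ.tendsto_atTop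
      have key : ∀ k, |‖lam • B (x (φ k)) + (u : X)‖ -
          ‖A (x (φ k)) + lam • B (x (φ k))‖| ≤ ‖(u : X) - A (x (φ k))‖ := by
        intro k
        have := abs_norm_sub_norm_le (lam • B (x (φ k)) + (u : X))
          (A (x (φ k)) + lam • B (x (φ k)))
        have heq : lam • B (x (φ k)) + (u : X) -
            (A (x (φ k)) + lam • B (x (φ k))) = (u : X) - A (x (φ k)) := by abel
        rwa [heq] at this
      have hlo : ∀ k, ‖A (x (φ k)) + lam • B (x (φ k))‖ - ‖(u : X) - A (x (φ k))‖ ≤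
          ‖lam • B (x (φ k)) + (u : X)‖ := fun k => by
        have := (abs_le.mp (key k)).1; linarith
      have hhi : ∀ k, ‖lam • B (x (φ k)) + (u : X)‖ ≤
          ‖A (x (φ k)) + lam • B (x (φ k))‖ + ‖(u : X) - A (x (φ k))‖ := fun k => by
        have := (abs_le.mp (key k)).2; linarith
      have h1 : Tendsto (fun k => ‖A (x (φ k)) + lam • B (x (φ k))‖ -
          ‖(u : X) - A (x (φ k))‖) atTop (𝓝 2) := by
        have := hsum'.sub hdiff; simpa using this
      have h2 : Tendsto (fun k => ‖A (x (φ k)) + lam • B (x (φ k))‖ +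
          ‖(u : X) - A (x (φ k))‖) atTop (𝓝 2) := by
        have := hsum'.add hdiff; simpa using this
      exact tendsto_of_tendsto_of_tendsto_of_le_of_le h1 h2 hlo hhi
    -- apply local uniform convexity
    have hL : Tendsto (fun k => lam • B (x (φ k))) atTop (𝓝 (u : X)) :=
      hX (u : X) hu1 _ (fun k => hBb (φ k)) hBu
    -- A u = u
    have hAu : A (u : X) = (u : X) := by
      have h1 : Tendsto (fun k => A (A (x (φ k)))) atTop (𝓝 (A (u : X))) :=
        (A.continuous.tendsto _).comp hAconv
      have h2 : Tendsto (fun k => A (A (x (φ k)))) atTop (𝓝 (u : X)) := by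
        simpa only [hA2'] using hAconv
      exact tendsto_nhds_unique h1 h2
    -- B u = u
    have hBu' : B (u : X) = (u : X) := by
      have h1 : Tendsto (fun k => B (lam • B (x (φ k)))) atTop (𝓝 (B (u : X))) :=
        (B.continuous.tendsto _).comp hL
      have h2 : Tendsto (fun k => B (lam • B (x (φ k)))) atTop (𝓝 (u : X)) := by
        have heq : ∀ k, B (lam • B (x (φ k))) = lam • B (x (φ k)) := fun k => by
          rw [map_smul, hB2']
        simpa only [heq] using hL
      exact tendsto_nhds_unique h1 h2
    refine ⟨(u : X), ?_, hAu, hBu'⟩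
    intro h
    rw [h, norm_zero] at hu1
    norm_num at hu1
  · rintro ⟨y, hy, hAy, hBy⟩
    refine ⟨1, by simp, ?_⟩
    rw [hAn, hBn, one_smul]
    apply le_antisymm
    · calc ‖A + B‖ ≤ ‖A‖ + ‖B‖ := norm_add_le _ _
        _ = 1 + 1 := by rw [hAn, hBn]
    · have h := (A + B).le_opNorm y
      have heq : (A + B) y = y + y := by
        simp [ContinuousLinearMap.add_apply, hAy, hBy]
      rw [heq] at h
      have h2 : ‖y + y‖ = 2 * ‖y‖ := by
        rw [← two_smul 𝕜 y, norm_smul]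
        simp [RCLike.norm_ofNat]
      rw [h2] at h
      have hy' : 0 < ‖y‖ := norm_pos_iff.mpr hy
      have := le_of_mul_le_mul_right (by linarith : 2 * ‖y‖ ≤ ‖A + B‖ * ‖y‖) hy'
      linarith
end

section
/- Let X, Y be normed spaces over 𝕂 ∈ {ℝ, ℂ}, let A : X → Y be a nonzero bounded linear operator, and let x, y be unit vectors in X at which A attains its norm (i.e. x, y ∈ M_A). If Ax is norm-parallel to Ay, then x is norm-parallel to y. -/
theorem parallel_of_image_parallel_at_norm_attaining
    {𝕜 X Y : Type*} [RCLike 𝕜] [NormedAddCommGroup X] [NormedSpace 𝕜 X]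
    [NormedAddCommGroup Y] [NormedSpace 𝕜 Y]
    (A : X →L[𝕜] Y) (hA : A ≠ 0) (x y : X)
    (hx : ‖x‖ = 1 ∧ ‖A x‖ = ‖A‖) (hy : ‖y‖ = 1 ∧ ‖A y‖ = ‖A‖)
    (h : ∃ lam : 𝕜, ‖lam‖ = 1 ∧ ‖A x + lam • A y‖ = ‖A x‖ + ‖A y‖) :
    ∃ lam : 𝕜, ‖lam‖ = 1 ∧ ‖x + lam • y‖ = ‖x‖ + ‖y‖ := by
  obtain ⟨lam, hl, he⟩ := h
  refine ⟨lam, hl, ?_⟩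
  have hApos : (0 : ℝ) < ‖A‖ := norm_pos_iff.mpr hA
  have h1 : ‖A (x + lam • y)‖ = 2 * ‖A‖ := by
    simp only [map_add, map_smul]
    rw [he, hx.2, hy.2]; ring
  have h2 : 2 * ‖A‖ ≤ ‖A‖ * ‖x + lam • y‖ := by
    rw [← h1]; exact A.le_opNorm _
  have h3 : (2 : ℝ) ≤ ‖x + lam • y‖ := by
    nlinarith
  have h4 : ‖x + lam • y‖ ≤ 2 := by
    calc ‖x + lam • y‖ ≤ ‖x‖ + ‖lam • y‖ := norm_add_le _ _
    _ = 2 := by rw [norm_smul, hl, hx.1, hy.1]; ring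
  rw [hx.1, hy.1]; linarith
end
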